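/- arXiv:0801.3365 — 5 statements merged into one kernel-verified Lean document; each statement's English description precedes it below -/
import Mathlib

section
/- If a poset K is upward directed, then K is simply connected: every loop based at a 0-simplex a is homotopic to the trivial (degenerate) loop at a, where homotopy is generated by elementary deformations via 2-simplices. -/
/-- A 1-simplex of a poset `K`: two faces and a support dominating both. -/
structure OneSimplex (K : Type*) [PartialOrder K] where
  face0 : K
  face1 : K
  supp : K
  le0 : face0 ≤ supp
  le1 : face1 ≤ supp

/-- The reverse of a 1-simplex: same support, exchanged faces. -/
def OneSimplex.rev {K : Type*} [PartialOrder K] (b : OneSimplex K) : OneSimplex K :=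
  ⟨b.face1, b.face0, b.supp, b.le1, b.le0⟩

/-- The degenerate 1-simplex `σ₀ a` at a 0-simplex `a`. -/
def OneSimplex.degenerate {K : Type*} [PartialOrder K] (a : K) : OneSimplex K :=
  ⟨a, a, a, le_refl a, le_refl a⟩

/-- A 2-simplex of a poset `K`, presented by its three vertices, the supports of its
three faces, and its own support, with all required order relations. Its faces
`∂₀c, ∂₁c, ∂₂c` satisfy the simplicial identities by construction. -/
structure TwoSimplex (K : Type*) [PartialOrder K] where
  vstart : K
  vmid : K
  vend : K
  s0 : K
  s1 : K
  s2 : K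
  supp : K
  hs0 : s0 ≤ supp
  hs1 : s1 ≤ supp
  hs2 : s2 ≤ supp
  h0s : vmid ≤ s0
  h0e : vend ≤ s0
  h1s : vstart ≤ s1
  h1e : vend ≤ s1
  h2s : vstart ≤ s2
  h2e : vmid ≤ s2

/-- The face `∂₀c` (from `vmid` to `vend`). -/
def TwoSimplex.face0 {K : Type*} [PartialOrder K] (c : TwoSimplex K) : OneSimplex K :=
  ⟨c.vend, c.vmid, c.s0, c.h0e, c.h0s⟩

/-- The face `∂₁c` (from `vstart` to `vend`). -/
def TwoSimplex.face1 {K : Type*} [PartialOrder K] (c : TwoSimplex K) : OneSimplex K :=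
  ⟨c.vend, c.vstart, c.s1, c.h1e, c.h1s⟩

/-- The face `∂₂c` (from `vstart` to `vmid`). -/
def TwoSimplex.face2 {K : Type*} [PartialOrder K] (c : TwoSimplex K) : OneSimplex K :=
  ⟨c.vmid, c.vstart, c.s2, c.h2e, c.h2s⟩

/-- A path in the poset `K` from `x` to `y`: a nonempty composable string of
1-simplices, `∂₁` of the first being `x` and `∂₀` of the last being `y`. -/
inductive PPath (K : Type*) [PartialOrder K] : K → K → Type _
  | single (b : OneSimplex K) : PPath K b.face1 b.face0
  | cons (b : OneSimplex K) {x : K} (p : PPath K x b.face1) : PPath K x b.face0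

/-- Composition of paths: `q.comp p` first traverses `p`, then `q`. -/
def PPath.comp {K : Type*} [PartialOrder K] : ∀ {x y w : K}, PPath K y w → PPath K x y → PPath K x w
  | _, _, _, .single b, p => .cons b p
  | _, _, _, .cons b q, p => .cons b (q.comp p)

/-- The reverse of a path. -/
def PPath.rev {K : Type*} [PartialOrder K] : ∀ {x y : K}, PPath K x y → PPath K y x
  | _, _, .single b => .single b.rev
  | _, _, .cons b p => PPath.comp p.rev (.single b.rev)

/-- Multiplicative extension of a function on 1-simplices to paths:
`z(bₙ * ⋯ * b₁) = z(bₙ) ⋯ z(b₁)`. -/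
def PPath.eval {K : Type*} [PartialOrder K] {M : Type*} [Monoid M]
    (z : OneSimplex K → M) : ∀ {x y : K}, PPath K x y → M
  | _, _, .single b => z b
  | _, _, .cons b p => z b * p.eval z

/-- The support of the path is causally disjoint from `o` (every 1-simplex of the path
has support `⊥ o`). -/
def PPath.suppDisjoint {K : Type*} [PartialOrder K] (perp : K → K → Prop) (o : K) :
    ∀ {x y : K}, PPath K x y → Prop
  | _, _, .single b => perp b.supp o
  | _, _, .cons b p => perp b.supp o ∧ p.suppDisjoint perp o

/-- Homotopy of paths with the same endpoints: the equivalence relation generated by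
elementary deformations (replacing `∂₁c` by `∂₀c * ∂₂c` for a 2-simplex `c`), compatible
with composition. -/
inductive PHomotopic {K : Type*} [PartialOrder K] : ∀ {x y : K}, PPath K x y → PPath K x y → Prop
  | refl {x y : K} (p : PPath K x y) : PHomotopic p p
  | symm {x y : K} {p q : PPath K x y} : PHomotopic p q → PHomotopic q p
  | trans {x y : K} {p q r : PPath K x y} : PHomotopic p q → PHomotopic q r → PHomotopic p r
  | deform (c : TwoSimplex K) :
      PHomotopic (.single c.face1) ((PPath.single c.face0).comp (.single c.face2))
  | comp_congr {x y w : K} {q q' : PPath K y w} {p p' : PPath K x y} :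
      PHomotopic q q' → PHomotopic p p' → PHomotopic (q.comp p) (q'.comp p')


/-!
Any two 1-simplices with the same endpoints are homotopic: enlarging the support of a
1-simplex is an elementary deformation, and in a directed poset two supports have a common
upper bound. A path `b * p` then contracts by induction on its length: once `p` has been
deformed into a single 1-simplex `e'` whose support lies above `|b|` and the target support,
the triangle with faces `b`, `e'` and the target 1-simplex collapses `b * e'`.
-/

section

variable {K : Type*} [PartialOrder K]

def OneSimplex.ofLE {x y s : K} (hx : x ≤ s) (hy : y ≤ s) : OneSimplex K :=
  ⟨y, x, s, hy, hx⟩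

namespace PHomotopic

theorem single_ofLE_mono {x y s t : K} (hx : x ≤ s) (hy : y ≤ s) (hst : s ≤ t) :
    PHomotopic (.single (OneSimplex.ofLE hx hy))
      (.single (OneSimplex.ofLE (hx.trans hst) (hy.trans hst))) := by
  -- both are the long face of a triangle `x → y → y` whose other faces have support `t`
  have triangle : ∀ (r : K) (hxr : x ≤ r) (hyr : y ≤ r), r ≤ t →
      PHomotopic (.single (OneSimplex.ofLE hxr hyr))
        ((PPath.single (OneSimplex.ofLE (hy.trans hst) (hy.trans hst))).comp
          (.single (OneSimplex.ofLE (hx.trans hst) (hy.trans hst)))) := fun r hxr hyr hrt =>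
    deform
      { vstart := x, vmid := y, vend := y, s0 := t, s1 := r, s2 := t, supp := t
        hs0 := le_rfl, hs1 := hrt, hs2 := le_rfl
        h0s := hy.trans hst, h0e := hy.trans hst, h1s := hxr, h1e := hyr
        h2s := hx.trans hst, h2e := hy.trans hst }
  exact (triangle s hx hy hst).trans (triangle t _ _ le_rfl).symm

theorem single_ofLE [IsDirectedOrder K] {x y s s' : K} (hx : x ≤ s) (hy : y ≤ s)
    (hx' : x ≤ s') (hy' : y ≤ s') :
    PHomotopic (.single (OneSimplex.ofLE hx hy)) (.single (OneSimplex.ofLE hx' hy')) := by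
  obtain ⟨t, hst, hs't⟩ := exists_ge_ge s s'
  exact (single_ofLE_mono hx hy hst).trans (single_ofLE_mono hx' hy' hs't).symm

end PHomotopic

theorem PPath.homotopic_single_ofLE [IsDirectedOrder K] {x y : K} (p : PPath K x y) {s : K}
    (hx : x ≤ s) (hy : y ≤ s) :
    PHomotopic p (.single (OneSimplex.ofLE hx hy)) := by
  induction p generalizing s with
  | single b => exact PHomotopic.single_ofLE b.le1 b.le0 hx hy
  | @cons b x p ih =>
    obtain ⟨t, hbt, hst⟩ := exists_ge_ge b.supp s
    have hp := ih (hx.trans hst) (b.le1.trans hbt)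
    have collapse : PHomotopic (.single (OneSimplex.ofLE hx hy))
        ((PPath.single b).comp (.single (OneSimplex.ofLE (hx.trans hst) (b.le1.trans hbt)))) :=
      .deform
        { vstart := x, vmid := b.face1, vend := b.face0, s0 := b.supp, s1 := s, s2 := t, supp := t
          hs0 := hbt, hs1 := hst, hs2 := le_rfl
          h0s := b.le1, h0e := b.le0, h1s := hx, h1e := hy
          h2s := hx.trans hst, h2e := b.le1.trans hbt }
    exact (PHomotopic.comp_congr (.refl (.single b)) hp).trans collapse.symm

end

theorem upward_directed_simply_connected {K : Type*} [PartialOrder K]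
    (hdir : ∀ a₁ a₂ : K, ∃ a₃ : K, a₁ ≤ a₃ ∧ a₂ ≤ a₃) :
    ∀ (a : K) (ℓ : PPath K a a),
      PHomotopic ℓ (PPath.single (OneSimplex.degenerate a)) := by
  have : IsDirectedOrder K := ⟨hdir⟩
  intro a ℓ
  exact ℓ.homotopic_single_ofLE le_rfl le_rfl
end

section
/- Homotopic invariance of 1-cocycles: if p and q are homotopic paths in a poset K (same endpoints, related by a finite sequence of elementary deformations), then z(p) = z(q) for any unitary-valued 1-cocycle z. -/
namespace PPath

variable {K : Type*} [PartialOrder K] {M : Type*} [Monoid M] (z : OneSimplex K → M)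

theorem eval_comp : ∀ {x y w : K} (q : PPath K y w) (p : PPath K x y),
    (q.comp p).eval z = q.eval z * p.eval z
  | _, _, _, .single _, _ => rfl
  | _, _, _, .cons b q, p => by
    rw [comp, eval, eval, eval_comp q p, mul_assoc]

theorem eval_eq_of_homotopic (hz : ∀ c : TwoSimplex K, z c.face0 * z c.face2 = z c.face1)
    {x y : K} {p q : PPath K x y} (h : PHomotopic p q) : p.eval z = q.eval z := by
  induction h with
  | refl => rfl
  | symm _ ih => exact ih.symm
  | trans _ _ ih₁ ih₂ => exact ih₁.trans ih₂
  | deform c =>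
    -- `rw [eval_comp]` fails: the composite is well-typed only after unfolding the faces of `c`.
    refine Eq.trans ?_ (eval_comp z _ _).symm
    exact (hz c).symm
  | comp_congr _ _ ihq ihp => rw [eval_comp, eval_comp, ihq, ihp]

end PPath

theorem cocycle_homotopy_invariance_general {K : Type*} [PartialOrder K]
    {H : Type*} [NormedAddCommGroup H] [InnerProductSpace ℂ H]
    (z : OneSimplex K → (H →L[ℂ] H))
    (hzc : ∀ c : TwoSimplex K, z c.face0 * z c.face2 = z c.face1) :
    ∀ {x y : K} (p q : PPath K x y), PHomotopic p q → p.eval z = q.eval z :=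
  fun _ _ => PPath.eval_eq_of_homotopic z hzc

theorem cocycle_homotopy_invariance {K : Type*} [PartialOrder K]
    {H : Type*} [NormedAddCommGroup H] [InnerProductSpace ℂ H] [CompleteSpace H]
    (z : OneSimplex K → (H →L[ℂ] H))
    (hzu : ∀ b : OneSimplex K, z b ∈ unitary (H →L[ℂ] H))
    (hzc : ∀ c : TwoSimplex K, z c.face0 * z c.face2 = z c.face1) :
    ∀ {x y : K} (p q : PPath K x y), PHomotopic p q → p.eval z = q.eval z :=
  cocycle_homotopy_invariance_general z hzc
end

section
/- Every unitary-valued 1-cocycle z on a pathwise connected poset K induces a well-defined unitary representation of the fundamental group π₁(K, a) at any base point a, by sending the homotopy class [ℓ] of a loop ℓ at a to z(ℓ). -/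
/-- The setoid of loops at `a` under homotopy. -/
def loopSetoid {K : Type*} [PartialOrder K] (a : K) : Setoid (PPath K a a) :=
  ⟨fun p q => PHomotopic p q,
    ⟨fun p => PHomotopic.refl p, fun h => h.symm, fun h h' => h.trans h'⟩⟩


/-! The cocycle identity says exactly that `PPath.eval z` is invariant under an elementary
deformation, so `z(ℓ)` depends only on the homotopy class of `ℓ`; multiplicativity under
composition and unitarity are inherited from the 1-simplices. -/

section Eval

variable {K : Type*} [PartialOrder K] {M : Type*} [Monoid M] (z : OneSimplex K → M)

lemma PPath.eval_comp_s4 : ∀ {x y w : K} (q : PPath K y w) (p : PPath K x y),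
    (q.comp p).eval z = q.eval z * p.eval z
  | _, _, _, .single _, _ => rfl
  | _, _, _, .cons b q, p => by
    rw [PPath.comp, PPath.eval, PPath.eval, PPath.eval_comp_s4 q p, mul_assoc]

lemma PPath.eval_mem {S : Type*} [SetLike S M] [SubmonoidClass S M] {s : S}
    (hz : ∀ b, z b ∈ s) : ∀ {x y : K} (p : PPath K x y), p.eval z ∈ s
  | _, _, .single b => hz b
  | _, _, .cons b p => mul_mem (hz b) (p.eval_mem hz)

variable {z}

lemma PHomotopic.eval_eq (hz : ∀ c : TwoSimplex K, z c.face0 * z c.face2 = z c.face1)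
    {x y : K} {p q : PPath K x y} (h : PHomotopic p q) : p.eval z = q.eval z := by
  induction h with
  | refl => rfl
  | symm _ ih => exact ih.symm
  | trans _ _ ih₁ ih₂ => exact ih₁.trans ih₂
  | deform c => exact (hz c).symm
  | comp_congr _ _ ih₁ ih₂ => rw [PPath.eval_comp_s4, PPath.eval_comp_s4, ih₁, ih₂]

end Eval

theorem cocycle_defines_pi1_representation_general {K : Type*} [PartialOrder K]
    {H : Type*} [NormedAddCommGroup H] [InnerProductSpace ℂ H] [CompleteSpace H]
    (a : K)
    (z : OneSimplex K → (H →L[ℂ] H))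
    (hzu : ∀ b : OneSimplex K, z b ∈ unitary (H →L[ℂ] H))
    (hzc : ∀ c : TwoSimplex K, z c.face0 * z c.face2 = z c.face1) :
    ∃ Z : Quotient (loopSetoid a) → (H →L[ℂ] H),
      (∀ ℓ : PPath K a a, Z (Quotient.mk (loopSetoid a) ℓ) = ℓ.eval z) ∧
      (∀ ℓ : PPath K a a, Z (Quotient.mk (loopSetoid a) ℓ) ∈ unitary (H →L[ℂ] H)) ∧
      (∀ ℓ ℓ' : PPath K a a,
        Z (Quotient.mk (loopSetoid a) (ℓ.comp ℓ')) =
          Z (Quotient.mk (loopSetoid a) ℓ) * Z (Quotient.mk (loopSetoid a) ℓ')) :=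
  ⟨Quotient.lift (PPath.eval z) fun _ _ h => PHomotopic.eval_eq hzc h,
    fun _ => rfl, fun ℓ => ℓ.eval_mem z hzu, fun ℓ ℓ' => PPath.eval_comp_s4 z ℓ ℓ'⟩

theorem cocycle_defines_pi1_representation {K : Type*} [PartialOrder K]
    {H : Type*} [NormedAddCommGroup H] [InnerProductSpace ℂ H] [CompleteSpace H]
    (hconn : ∀ x y : K, Nonempty (PPath K x y))
    (a : K)
    (z : OneSimplex K → (H →L[ℂ] H))
    (hzu : ∀ b : OneSimplex K, z b ∈ unitary (H →L[ℂ] H))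
    (hzc : ∀ c : TwoSimplex K, z c.face0 * z c.face2 = z c.face1) :
    ∃ Z : Quotient (loopSetoid a) → (H →L[ℂ] H),
      (∀ ℓ : PPath K a a, Z (Quotient.mk (loopSetoid a) ℓ) = ℓ.eval z) ∧
      (∀ ℓ : PPath K a a, Z (Quotient.mk (loopSetoid a) ℓ) ∈ unitary (H →L[ℂ] H)) ∧
      (∀ ℓ ℓ' : PPath K a a,
        Z (Quotient.mk (loopSetoid a) (ℓ.comp ℓ')) =
          Z (Quotient.mk (loopSetoid a) ℓ) * Z (Quotient.mk (loopSetoid a) ℓ')) :=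
  cocycle_defines_pi1_representation_general a z hzu hzc
end

section
/- A topologically trivial unitary net representation is equivalent to one with trivial ψ: if {π, ψ} is a unitary net representation whose associated 1-cocycle ζ^π is a 1-coboundary, i.e. ζ^π(b) = W*_{∂₀b} W_{∂₁b} for unitaries W_a, then setting ρ_a(A) := W_a π_a(A) W_a*, the family W is a unitary intertwiner from {π, ψ} to {ρ, 𝟙}, where 𝟙 assigns the identity operator to every inclusion. -/
/-
If `ψ` is unitary and multiplicative along inclusions, then `ψ` of a trivial inclusion is a
unitary idempotent, hence `1`. Evaluating the coboundary relation on the 1-simplex with faces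
`b ≤ a` and support `a` then gives `ψ (b ≤ a) = W a⋆ W b`, so `W` carries `ψ` to the identity,
while `W a π_a(x) = ρ_a(x) W a` is just `W a⋆ W a = 1`.
-/

section CocycleOnPoset

variable {K : Type*} [PartialOrder K] {R : Type*} [Monoid R] [StarMul R]
  (ψ : ∀ ⦃a b : K⦄, b ≤ a → R)

theorem eq_one_of_le_refl (hψu : ∀ ⦃a b : K⦄ (h : b ≤ a), ψ h ∈ unitary R)
    (hψc : ∀ ⦃a b c : K⦄ (h₁ : b ≤ a) (h₂ : c ≤ b), ψ h₁ * ψ h₂ = ψ (h₂.trans h₁)) (a : K) :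
    ψ (le_refl a) = 1 :=
  (IsIdempotentElem.iff_eq_one_of_isUnit (Unitary.isUnit_coe (U := ⟨_, hψu le_rfl⟩))).mp
    (hψc le_rfl le_rfl)

theorem eq_star_mul_of_coboundary (hψ1 : ∀ a : K, ψ (le_refl a) = 1) (W : K → R)
    (hcob : ∀ b : OneSimplex K, star (ψ b.le0) * ψ b.le1 = star (W b.face0) * W b.face1)
    {a b : K} (h : b ≤ a) : ψ h = star (W a) * W b := by
  have hstar : star (ψ h) = star (W b) * W a := by
    simpa only [hψ1, mul_one] using hcob ⟨b, a, a, h, le_refl a⟩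
  simpa only [star_star, star_mul] using congrArg star hstar

end CocycleOnPoset

theorem topologically_trivial_rep_has_trivial_form_general {K : Type*} [PartialOrder K]
    {H : Type*} [NormedAddCommGroup H] [InnerProductSpace ℂ H] [CompleteSpace H]
    (A : K → Type*) [∀ a, Ring (A a)] [∀ a, Algebra ℂ (A a)] [∀ a, StarRing (A a)]
    (π : ∀ a : K, A a →⋆ₐ[ℂ] (H →L[ℂ] H))
    (ψ : ∀ ⦃a b : K⦄, b ≤ a → (H →L[ℂ] H))
    (hψu : ∀ ⦃a b : K⦄ (h : b ≤ a), ψ h ∈ unitary (H →L[ℂ] H))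
    (hψc : ∀ ⦃a b c : K⦄ (h₁ : b ≤ a) (h₂ : c ≤ b),
      ψ h₁ * ψ h₂ = ψ (h₂.trans h₁))
    (W : K → (H →L[ℂ] H))
    (hWu : ∀ a : K, W a ∈ unitary (H →L[ℂ] H))
    (hcob : ∀ b : OneSimplex K,
      star (ψ b.le0) * ψ b.le1 = star (W b.face0) * W b.face1) :
    (∀ (a : K) (x : A a),
        W a * π a x = (W a * π a x * star (W a)) * W a) ∧
    (∀ ⦃a b : K⦄ (h : b ≤ a), W a * ψ h = (1 : H →L[ℂ] H) * W b) := by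
  refine ⟨fun a x => ?_, fun a b h => ?_⟩
  · rw [mul_assoc _ (star (W a)), Unitary.star_mul_self_of_mem (hWu a), mul_one]
  · rw [eq_star_mul_of_coboundary ψ (eq_one_of_le_refl ψ hψu hψc) W hcob h, ← mul_assoc,
      Unitary.mul_star_self_of_mem (hWu a)]

theorem topologically_trivial_rep_has_trivial_form {K : Type*} [PartialOrder K]
    {H : Type*} [NormedAddCommGroup H] [InnerProductSpace ℂ H] [CompleteSpace H]
    (hconn : ∀ x y : K, Nonempty (PPath K x y))
    (A : K → Type*) [∀ a, Ring (A a)] [∀ a, Algebra ℂ (A a)] [∀ a, StarRing (A a)]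
    (j : ∀ ⦃a b : K⦄, b ≤ a → (A b →⋆ₐ[ℂ] A a))
    (hj : ∀ ⦃a b c : K⦄ (h₁ : b ≤ a) (h₂ : c ≤ b) (x : A c),
      j h₁ (j h₂ x) = j (h₂.trans h₁) x)
    (π : ∀ a : K, A a →⋆ₐ[ℂ] (H →L[ℂ] H))
    (ψ : ∀ ⦃a b : K⦄, b ≤ a → (H →L[ℂ] H))
    (hψu : ∀ ⦃a b : K⦄ (h : b ≤ a), ψ h ∈ unitary (H →L[ℂ] H))
    (hψπ : ∀ ⦃a b : K⦄ (h : b ≤ a) (x : A b),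
      ψ h * π b x = π a (j h x) * ψ h)
    (hψc : ∀ ⦃a b c : K⦄ (h₁ : b ≤ a) (h₂ : c ≤ b),
      ψ h₁ * ψ h₂ = ψ (h₂.trans h₁))
    (W : K → (H →L[ℂ] H))
    (hWu : ∀ a : K, W a ∈ unitary (H →L[ℂ] H))
    (hcob : ∀ b : OneSimplex K,
      star (ψ b.le0) * ψ b.le1 = star (W b.face0) * W b.face1) :
    (∀ (a : K) (x : A a),
        W a * π a x = (W a * π a x * star (W a)) * W a) ∧
    (∀ ⦃a b : K⦄ (h : b ≤ a), W a * ψ h = (1 : H →L[ℂ] H) * W b) :=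
  topologically_trivial_rep_has_trivial_form_general A π ψ hψu hψc W hWu hcob
end

section
/- Let z be a topologically trivial (path-independent) unitary 1-cocycle and φ a unitary 1-cocycle such that φ(b) ∈ (z,z)_o for every 1-simplex b, i.e. φ(b) intertwines z with itself at o. Define the join on 1-simplices by (φ ⋈ z)(b) := z(b)·z(p_{(∂₁b,o)})·φ(b)·z(p_{(∂₁b,o)})*. Then (φ ⋈ z)(q) = z(p_{(∂₀q,o)})·φ(q)·z(p_{(∂₁q,o)})* holds for every path q, and consequently φ ⋈ z satisfies the 1-cocycle identity. -/
/-- The join of a 1-cocycle `φ` (localized at the pole) with a topologically trivial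
1-cocycle `z`, with respect to a path-frame `P`. -/
noncomputable def joinFun {K : Type*} [PartialOrder K]
    {H : Type*} [NormedAddCommGroup H] [InnerProductSpace ℂ H] [CompleteSpace H] {o : K}
    (P : ∀ a : K, PPath K o a) (z φ : OneSimplex K → (H →L[ℂ] H))
    (b : OneSimplex K) : H →L[ℂ] H :=
  z b * ((P b.face1).eval z * φ b * star ((P b.face1).eval z))

lemma eval_unitary {K : Type*} [PartialOrder K] {M : Type*} [Monoid M] [StarMul M]
    (z : OneSimplex K → M) (hzu : ∀ b, z b ∈ unitary M) :
    ∀ {x y : K} (p : PPath K x y), p.eval z ∈ unitary M := by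
  intro x y p
  induction p with
  | single b => exact hzu b
  | cons b p ih => exact mul_mem (hzu b) ih

theorem join_along_paths {K : Type*} [PartialOrder K]
    {H : Type*} [NormedAddCommGroup H] [InnerProductSpace ℂ H] [CompleteSpace H]
    (o : K) (P : ∀ a : K, PPath K o a)
    (hP : PHomotopic (P o) (PPath.single (OneSimplex.degenerate o)))
    (z : OneSimplex K → (H →L[ℂ] H))
    (hzu : ∀ b : OneSimplex K, z b ∈ unitary (H →L[ℂ] H))
    (hzc : ∀ c : TwoSimplex K, z c.face0 * z c.face2 = z c.face1)
    (hpi : ∀ (x y : K) (p q : PPath K x y), p.eval z = q.eval z)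
    (φ : OneSimplex K → (H →L[ℂ] H))
    (hφu : ∀ b : OneSimplex K, φ b ∈ unitary (H →L[ℂ] H))
    (hφc : ∀ c : TwoSimplex K, φ c.face0 * φ c.face2 = φ c.face1)
    (hjoin : ∀ b b' : OneSimplex K,
      ((P b'.face0).eval z * φ b * star ((P b'.face0).eval z)) * z b' =
        z b' * ((P b'.face1).eval z * φ b * star ((P b'.face1).eval z))) :
    (∀ (x y : K) (q : PPath K x y),
        q.eval (joinFun P z φ) = (P y).eval z * q.eval φ * star ((P x).eval z)) ∧
    (∀ c : TwoSimplex K,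
        joinFun P z φ c.face0 * joinFun P z φ c.face2 = joinFun P z φ c.face1) := by
  have hE : ∀ a : K, (P a).eval z ∈ unitary (H →L[ℂ] H) := fun a => eval_unitary z hzu _
  have hss : ∀ a : K, star ((P a).eval z) * (P a).eval z = 1 := fun a =>
    Unitary.star_mul_self_of_mem (hE a)
  have h1 : ∀ b : OneSimplex K,
      joinFun P z φ b = (P b.face0).eval z * φ b * star ((P b.face1).eval z) := by
    intro b
    have hp := hpi o b.face0 (PPath.cons b (P b.face1)) (P b.face0)
    simp only [PPath.eval] at hp
    simp only [joinFun, ← hp]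
    simp [mul_assoc]
  constructor
  · intro x y q
    induction q with
    | single b => simpa [PPath.eval] using h1 b
    | cons b p ih =>
      simp only [PPath.eval, ih, h1 b, mul_assoc]
      rw [← mul_assoc (star ((P b.face1).eval z)), hss, one_mul]
  · intro c
    simp only [h1]
    have e00 : c.face0.face0 = c.vend := rfl
    have e01 : c.face0.face1 = c.vmid := rfl
    have e20 : c.face2.face0 = c.vmid := rfl
    have e21 : c.face2.face1 = c.vstart := rfl
    have e10 : c.face1.face0 = c.vend := rfl
    have e11 : c.face1.face1 = c.vstart := rfl
    rw [e00, e01, e20, e21, e10, e11]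
    calc (P c.vend).eval z * φ c.face0 * star ((P c.vmid).eval z) *
          ((P c.vmid).eval z * φ c.face2 * star ((P c.vstart).eval z))
        = (P c.vend).eval z * φ c.face0 *
          ((star ((P c.vmid).eval z) * (P c.vmid).eval z) * (φ c.face2 * star ((P c.vstart).eval z))) := by
          simp only [mul_assoc]
      _ = (P c.vend).eval z * (φ c.face0 * φ c.face2) * star ((P c.vstart).eval z) := by
          rw [hss]; simp only [one_mul, mul_assoc]
      _ = (P c.vend).eval z * φ c.face1 * star ((P c.vstart).eval z) := by rw [hφc]
end
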